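/- arXiv:1911.00574 — 2 statements merged into one kernel-verified Lean document; each statement's English description precedes it below -/
import Mathlib

section
/- Let Ω ⊂ ℝ² be open and bounded, and let ψ : ℝ² → ℝ be convex satisfying the transport inequality on Ω for nonnegative Radon measures μ, ν satisfying Assumption(h₁,h₂,λ₁,λ₂). Let x, y ∈ Ω with x ≠ y, set ℓ := |x−y|/2, let δ > 0, and suppose the δ-neighborhood U_δ := ⋃_{z ∈ [x,y]} B_δ(z) of the segment [x,y] is contained in Ω. If h₁ ≤ min{δ, ℓ} and h₂² < δℓ/(λ₁λ₂), then diam ∂ψ(U_δ) ≥ √( δℓ/(λ₁λ₂) ). -/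
open MeasureTheory Set Metric Filter
open scoped RealInnerProductSpace ENNReal

noncomputable section

abbrev E2 := EuclideanSpace ℝ (Fin 2)

/-- The subdifferential of `ψ` at `x`:
`∂ψ(x) = {z : ψ(y) ≥ ψ(x) + z·(y−x) for all y}`. -/
def subdiff (ψ : E2 → ℝ) (x : E2) : Set E2 :=
  {z | ∀ y : E2, ψ x + ⟪z, y - x⟫ ≤ ψ y}

/-- `∂ψ(A) = ⋃_{x ∈ A} ∂ψ(x)`. -/
def subdiffSet (ψ : E2 → ℝ) (A : Set E2) : Set E2 :=
  ⋃ x ∈ A, subdiff ψ x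

/-- A rectangle of dimensions `a × b` in the plane: a rigid image of `[0,a] × [0,b]`. -/
def IsRectangle (R : Set E2) (a b : ℝ) : Prop :=
  ∃ f : E2 ≃ᵢ E2, R = f '' {p : E2 | p 0 ∈ Icc 0 a ∧ p 1 ∈ Icc 0 b}

/-- `ψ` satisfies the transport inequality `μ(A) ≤ ν(∂ψ(A))` for all Borel `A ⊆ Ω`. -/
def TransportIneq (Ω : Set E2) (ψ : E2 → ℝ) (μ ν : Measure E2) : Prop :=
  ∀ A : Set E2, A ⊆ Ω → MeasurableSet A → μ A ≤ ν (subdiffSet ψ A)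

/-- Assumption (h₁, h₂, λ₁, λ₂): `μ(R) ≥ |R|/λ₁` for every rectangle `R ⊆ Ω` with both
dimensions at least `h₁`, and `ν(R' ∩ ∂ψ(Ω)) ≤ λ₂ |R'|` for every rectangle `R'` with
both dimensions at least `h₂`. -/
def MeasAssump (Ω : Set E2) (ψ : E2 → ℝ) (μ ν : Measure E2)
    (h₁ h₂ l₁ l₂ : ℝ) : Prop :=
  (∀ (R : Set E2) (a b : ℝ), IsRectangle R a b → h₁ ≤ a → h₁ ≤ b → R ⊆ Ω →
      volume R ≤ ENNReal.ofReal l₁ * μ R) ∧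
  (∀ (R' : Set E2) (a b : ℝ), IsRectangle R' a b → h₂ ≤ a → h₂ ≤ b →
      ν (R' ∩ subdiffSet ψ Ω) ≤ ENNReal.ofReal l₂ * volume R')

/-- The δ-neighborhood `U_δ = ⋃_{z ∈ [x,y]} B_δ(z)` of the segment `[x,y]`. -/
def Useg (x y : E2) (δ : ℝ) : Set E2 := ⋃ z ∈ segment ℝ x y, closedBall z δ

/-- `ε = −min_{t ∈ [0,1]} ( ψ((1−t)x + ty) − (1−t)ψ(x) − tψ(y) )`. -/
def epsStar (ψ : E2 → ℝ) (x y : E2) : ℝ :=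
  - sInf ((fun t : ℝ => ψ ((1 - t) • x + t • y) - ((1 - t) * ψ x + t * ψ y)) '' Icc 0 1)

/-- `Ω^δ = {x ∈ Ω : dist(x, ∂Ω) > δ}`. -/
def innerSet (Ω : Set E2) (δ : ℝ) : Set E2 :=
  {p ∈ Ω | δ < infDist p (frontier Ω)}

/-!
If `diam ∂ψ(U_δ) < s := √(δℓ/(λ₁λ₂))`, the contradiction comes from comparing two rectangles.
The neighbourhood `U_δ` contains a rectangle `A` of dimensions `2ℓ × 2δ` along `[x, y]`. Since `ψ`
is continuous, `∂ψ(U_δ)` is bounded, so it lies in a closed ball of radius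
`r = max (diam ∂ψ(U_δ)) h₂ < s`, hence in a square `R` of side `2r`. Then
`4δℓ = |A| ≤ λ₁ μ(A) ≤ λ₁ ν(∂ψ(A)) ≤ λ₁ ν(R ∩ ∂ψ(Ω)) ≤ λ₁λ₂ · 4r² < 4δℓ`.
-/

open Bornology

lemma volume_box (a b : ℝ) :
    volume {p : E2 | p 0 ∈ Icc 0 a ∧ p 1 ∈ Icc 0 b} = ENNReal.ofReal a * ENNReal.ofReal b := by
  have h : {p : E2 | p 0 ∈ Icc 0 a ∧ p 1 ∈ Icc 0 b}
      = (MeasurableEquiv.toLp 2 (Fin 2 → ℝ)).symm ⁻¹' Set.univ.pi ![Icc 0 a, Icc 0 b] := by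
    ext p
    simp only [mem_preimage, mem_univ_pi, Fin.forall_fin_two]
    rfl
  rw [h, (EuclideanSpace.volume_preserving_symm_measurableEquiv_toLp (Fin 2)).measure_preimage
    (MeasurableSet.univ_pi fun i => by fin_cases i <;> exact measurableSet_Icc).nullMeasurableSet,
    volume_pi_pi, Fin.prod_univ_two]
  simp

lemma isClosed_box (a b : ℝ) : IsClosed {p : E2 | p 0 ∈ Icc 0 a ∧ p 1 ∈ Icc 0 b} :=
  (isClosed_Icc.preimage (EuclideanSpace.proj 0).continuous).inter
    (isClosed_Icc.preimage (EuclideanSpace.proj 1).continuous)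

namespace IsRectangle

variable {R : Set E2} {a b : ℝ}

lemma volume_eq (h : IsRectangle R a b) : volume R = ENNReal.ofReal a * ENNReal.ofReal b := by
  obtain ⟨f, rfl⟩ := h
  rw [← EuclideanSpace.euclideanHausdorffMeasure_eq_volume,
    f.isometry.euclideanHausdorffMeasure_image,
    EuclideanSpace.euclideanHausdorffMeasure_eq_volume, volume_box]

lemma measurableSet (h : IsRectangle R a b) : MeasurableSet R := by
  obtain ⟨f, rfl⟩ := h
  exact (f.toHomeomorph.isClosedMap _ (isClosed_box a b)).measurableSet

end IsRectangle

lemma subdiffSet_mono (ψ : E2 → ℝ) {A B : Set E2} (h : A ⊆ B) :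
    subdiffSet ψ A ⊆ subdiffSet ψ B :=
  biUnion_subset_biUnion_left h

lemma norm_le_of_mem_subdiff {ψ : E2 → ℝ} {p z : E2} (hz : z ∈ subdiff ψ p) :
    ‖z‖ ≤ ψ (p + ‖z‖⁻¹ • z) - ψ p := by
  have h := hz (p + ‖z‖⁻¹ • z)
  rw [add_sub_cancel_left, real_inner_smul_right, real_inner_self_eq_norm_sq] at h
  have : ‖z‖⁻¹ * ‖z‖ ^ 2 = ‖z‖ := by
    rcases eq_or_ne ‖z‖ 0 with h0 | h0
    · simp [h0]
    · field_simp
  linarith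

lemma isBounded_subdiffSet {ψ : E2 → ℝ} (hψ : Continuous ψ) {A : Set E2} (hA : IsBounded A) :
    IsBounded (subdiffSet ψ A) := by
  obtain ⟨r, hr⟩ := hA.subset_closedBall 0
  obtain ⟨M, hM⟩ :=
    (isCompact_closedBall (0 : E2) (r + 1)).exists_bound_of_continuousOn hψ.continuousOn
  refine isBounded_iff_forall_norm_le.2 ⟨2 * M, fun z hz => ?_⟩
  obtain ⟨p, hp, hz⟩ := mem_iUnion₂.1 hz
  have hp : ‖p‖ ≤ r := mem_closedBall_zero_iff.1 (hr hp)
  have hq : ‖p + ‖z‖⁻¹ • z‖ ≤ r + 1 := by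
    refine (norm_add_le _ _).trans (add_le_add hp ?_)
    rw [norm_smul, norm_inv, norm_norm]
    exact inv_mul_le_one_of_le₀ le_rfl (norm_nonneg z)
  have hψq := abs_le.1 (hM _ (mem_closedBall_zero_iff.2 hq))
  have hψp := abs_le.1 (hM p (mem_closedBall_zero_iff.2 (by linarith)))
  linarith [norm_le_of_mem_subdiff hz]

lemma isBounded_useg (x y : E2) (δ : ℝ) : IsBounded (Useg x y δ) :=
  (isBounded_closedBall.subset (segment_subset_closedBall_left x y)).cthickening.subset
    (iUnion₂_subset fun _ hz => closedBall_subset_cthickening hz δ)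

lemma exists_orthonormalBasis_apply_eq {E ι : Type*} [NormedAddCommGroup E]
    [InnerProductSpace ℝ E] [FiniteDimensional ℝ E] [Fintype ι]
    (hcard : Module.finrank ℝ E = Fintype.card ι) (i : ι) {u : E} (hu : ‖u‖ = 1) :
    ∃ b : OrthonormalBasis ι ℝ E, b i = u := by
  have hon : Orthonormal ℝ (({i} : Set ι).domRestrict fun _ => u) :=
    ⟨fun _ => hu, fun j k hjk => (hjk (Subsingleton.elim j k)).elim⟩
  obtain ⟨b, hb⟩ := hon.exists_orthonormalBasis_extension_of_card_eq hcard
  exact ⟨b, hb i rfl⟩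

lemma exists_isRectangle_subset_useg {x y : E2} (hxy : x ≠ y) (δ : ℝ) :
    ∃ R, IsRectangle R (dist x y) (2 * δ) ∧ R ⊆ Useg x y δ := by
  have hd : 0 < dist x y := dist_pos.2 hxy
  have hu : ‖(dist x y)⁻¹ • (y - x)‖ = 1 := by
    rw [norm_smul, ← dist_eq_norm', norm_inv, Real.norm_of_nonneg hd.le, inv_mul_cancel₀ hd.ne']
  obtain ⟨b, hb⟩ := exists_orthonormalBasis_apply_eq (by simp) (0 : Fin 2) hu
  refine ⟨_, ⟨b.repr.symm.toIsometryEquiv.trans (IsometryEquiv.addLeft (x - δ • b 1)), rfl⟩,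
    ?_⟩
  rintro _ ⟨p, ⟨hp₀, hp₁⟩, rfl⟩
  have hθ : p 0 / dist x y ∈ Icc (0 : ℝ) 1 :=
    ⟨div_nonneg hp₀.1 hd.le, div_le_one_of_le₀ hp₀.2 hd.le⟩
  refine mem_iUnion₂.2 ⟨x + (p 0 / dist x y) • (y - x),
    segment_eq_image' ℝ x y ▸ mem_image_of_mem _ hθ, ?_⟩
  have hdiff : x - δ • b 1 + b.repr.symm p - (x + (p 0 / dist x y) • (y - x))
      = (p 1 - δ) • b 1 := by
    rw [← b.sum_repr_symm, Fin.sum_univ_two, hb, smul_smul, div_eq_mul_inv]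
    module
  change dist (x - δ • b 1 + b.repr.symm p) _ ≤ δ
  rw [dist_eq_norm, hdiff, norm_smul, b.orthonormal.1 1, mul_one, Real.norm_eq_abs, abs_le]
  constructor <;> linarith [hp₁.1, hp₁.2]

lemma exists_isRectangle_superset_closedBall (c : E2) (r : ℝ) :
    ∃ R, IsRectangle R (2 * r) (2 * r) ∧ closedBall c r ⊆ R := by
  refine ⟨_, ⟨IsometryEquiv.addLeft (c - !₂[r, r]), rfl⟩,
    fun q hq => ⟨q - (c - !₂[r, r]), ?_, add_sub_cancel _ _⟩⟩
  have hcoord (i : Fin 2) : |q i - c i| ≤ r :=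
    (PiLp.norm_apply_le (q - c) i).trans (mem_closedBall_iff_norm.1 hq)
  have h₀ := abs_le.1 (hcoord 0)
  have h₁ := abs_le.1 (hcoord 1)
  simp only [mem_ofPred_eq, mem_Icc, PiLp.sub_apply, Matrix.cons_val_zero, Matrix.cons_val_one,
    Matrix.cons_val_fin_one]
  constructor <;> constructor <;> linarith

lemma exists_subset_closedBall_of_diam_le {α : Type*} [PseudoMetricSpace α] [Nonempty α]
    {s : Set α} (hs : IsBounded s) {r : ℝ} (hr : diam s ≤ r) : ∃ c, s ⊆ closedBall c r := by
  rcases s.eq_empty_or_nonempty with rfl | ⟨c, hc⟩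
  · exact ⟨Classical.arbitrary α, empty_subset _⟩
  · exact ⟨c, fun z hz => (dist_le_diam_of_mem hs hz hc).trans hr⟩

lemma volume_le_of_subdiffSet_subset {Ω : Set E2} {ψ : E2 → ℝ} {μ ν : Measure E2}
    {h₁ h₂ l₁ l₂ : ℝ} (htrans : TransportIneq Ω ψ μ ν) (hass : MeasAssump Ω ψ μ ν h₁ h₂ l₁ l₂)
    {A R : Set E2} {a b a' b' : ℝ} (hA : IsRectangle A a b) (ha : h₁ ≤ a) (hb : h₁ ≤ b)
    (hAΩ : A ⊆ Ω) (hR : IsRectangle R a' b') (ha' : h₂ ≤ a') (hb' : h₂ ≤ b')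
    (hAR : subdiffSet ψ A ⊆ R) :
    volume A ≤ ENNReal.ofReal l₁ * (ENNReal.ofReal l₂ * volume R) :=
  calc volume A ≤ ENNReal.ofReal l₁ * μ A := hass.1 A a b hA ha hb hAΩ
    _ ≤ ENNReal.ofReal l₁ * ν (subdiffSet ψ A) :=
      mul_le_mul_right (htrans A hAΩ hA.measurableSet) _
    _ ≤ ENNReal.ofReal l₁ * ν (R ∩ subdiffSet ψ Ω) :=
      mul_le_mul_right (measure_mono (subset_inter hAR (subdiffSet_mono ψ hAΩ))) _
    _ ≤ ENNReal.ofReal l₁ * (ENNReal.ofReal l₂ * volume R) :=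
      mul_le_mul_right (hass.2 R a' b' hR ha' hb') _

theorem stmt13_general (Ω : Set E2)
    (ψ : E2 → ℝ) (hψ : ConvexOn ℝ Set.univ ψ)
    (μ ν : Measure E2)
    (h₁ h₂ l₁ l₂ : ℝ) (hl₁ : 0 < l₁) (hl₂ : 0 < l₂)
    (htrans : TransportIneq Ω ψ μ ν) (hass : MeasAssump Ω ψ μ ν h₁ h₂ l₁ l₂)
    (x y : E2) (hxy : x ≠ y)
    (δ : ℝ) (hδ : 0 < δ) (hU : Useg x y δ ⊆ Ω)
    (ℓ : ℝ) (hℓ : ℓ = dist x y / 2)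
    (hcond1 : h₁ ≤ min δ ℓ) (hcond2 : h₂ ^ 2 < δ * ℓ / (l₁ * l₂)) :
    Real.sqrt (δ * ℓ / (l₁ * l₂)) ≤ diam (subdiffSet ψ (Useg x y δ)) := by
  have hℓ₀ : 0 < ℓ := by rw [hℓ]; exact half_pos (dist_pos.2 hxy)
  have hD : IsBounded (subdiffSet ψ (Useg x y δ)) :=
    isBounded_subdiffSet (continuousOn_univ.1 (hψ.continuousOn isOpen_univ))
      (isBounded_useg x y δ)
  by_contra! hlt
  set r := max (diam (subdiffSet ψ (Useg x y δ))) h₂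
  have hr₀ : 0 ≤ r := diam_nonneg.trans (le_max_left _ _)
  have hrs : r < √(δ * ℓ / (l₁ * l₂)) := max_lt hlt (Real.lt_sqrt_of_sq_lt hcond2)
  have hh₂r : h₂ ≤ 2 * r := by linarith [le_max_right (diam (subdiffSet ψ (Useg x y δ))) h₂]
  obtain ⟨A, hA, hAU⟩ := exists_isRectangle_subset_useg hxy δ
  obtain ⟨c, hDc⟩ := exists_subset_closedBall_of_diam_le hD (le_max_left _ h₂)
  obtain ⟨R, hR, hcR⟩ := exists_isRectangle_superset_closedBall c r
  have hvol := volume_le_of_subdiffSet_subset htrans hass hA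
    (by linarith [min_le_right δ ℓ]) (by linarith [min_le_left δ ℓ]) (hAU.trans hU) hR hh₂r hh₂r
    ((subdiffSet_mono ψ hAU).trans (hDc.trans hcR))
  rw [hA.volume_eq, hR.volume_eq, ← ENNReal.ofReal_mul dist_nonneg,
    ← ENNReal.ofReal_mul (by positivity), ← ENNReal.ofReal_mul hl₂.le,
    ← ENNReal.ofReal_mul hl₁.le, ENNReal.ofReal_le_ofReal_iff (by positivity),
    show dist x y = 2 * ℓ by rw [hℓ]; ring] at hvol
  have hr2 : r ^ 2 < δ * ℓ / (l₁ * l₂) :=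
    (sq_lt_sq₀ hr₀ (Real.sqrt_nonneg _)).2 hrs |>.trans_eq (Real.sq_sqrt (by positivity))
  rw [lt_div_iff₀ (by positivity)] at hr2
  nlinarith

/-- lower bound `diam ∂ψ(U_δ) ≥ √(δℓ/(λ₁λ₂))`. -/
theorem stmt13 (Ω : Set E2) (hΩo : IsOpen Ω) (hΩb : Bornology.IsBounded Ω)
    (ψ : E2 → ℝ) (hψ : ConvexOn ℝ Set.univ ψ)
    (μ ν : Measure E2) (hμl : IsLocallyFiniteMeasure μ) (hνl : IsLocallyFiniteMeasure ν)
    (h₁ h₂ l₁ l₂ : ℝ) (hh₁ : 0 ≤ h₁) (hh₂ : 0 ≤ h₂) (hl₁ : 0 < l₁) (hl₂ : 0 < l₂)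
    (htrans : TransportIneq Ω ψ μ ν) (hass : MeasAssump Ω ψ μ ν h₁ h₂ l₁ l₂)
    (x y : E2) (hx : x ∈ Ω) (hy : y ∈ Ω) (hxy : x ≠ y)
    (δ : ℝ) (hδ : 0 < δ) (hU : Useg x y δ ⊆ Ω)
    (ℓ : ℝ) (hℓ : ℓ = dist x y / 2)
    (hcond1 : h₁ ≤ min δ ℓ) (hcond2 : h₂ ^ 2 < δ * ℓ / (l₁ * l₂)) :
    Real.sqrt (δ * ℓ / (l₁ * l₂)) ≤ diam (subdiffSet ψ (Useg x y δ)) :=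
  stmt13_general Ω ψ hψ μ ν h₁ h₂ l₁ l₂ hl₁ hl₂ htrans hass x y hxy δ hδ hU ℓ hℓ hcond1 hcond2
end
end

section
/- There exists a universal constant C > 0 such that the following holds. Let ψ : ℝ² → ℝ be convex with ψ(a) = ψ(b) = 0, where a = (−ℓ,0), b = (ℓ,0), ℓ > 0; set ε := −min_{t∈[0,1]} ψ((1−t)a + tb) ≥ 0, let δ > 0 and let K > 0 satisfy |z| ≤ K for every z ∈ ∂ψ(y) with y ∈ [−ℓ/2, ℓ/2] × [0, 2δ]. Fix x⊥ > 0 with ε/K ≤ x⊥ and x⊥ ≤ δ, fix ξ ∈ ℝ and η > 0. Let y', y'' ∈ Ω_{x⊥} := {y : |y∥| ≤ ℓ/2, x⊥/2 ≤ y⊥ ≤ 2x⊥} with y' ≠ y'', and suppose there exist z' ∈ ∂ψ(y') with |z'⊥ − ξ| ≤ η and z'' ∈ ∂ψ(y'') with |z''⊥ − ξ| ≤ η. If |y'∥ − y''∥| ≤ ( ℓ η / (C K x⊥) ) · |y'⊥ − y''⊥|, then for every s ∈ (0,1) and every z ∈ ∂ψ( s y' + (1−s) y'' ), one has |z⊥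 − ξ| ≤ 2η. -/
/-!
Convexity makes the subdifferential monotone, so for `z ∈ ∂ψ(s y' + (1 - s) y'')` both
`⟪z' - z, y' - y''⟫` and `⟪z - z'', y' - y''⟫` are nonnegative. When the horizontal components
of all three subgradients are small, the almost vertical direction `y' - y''` lets the vertical
parts dominate these inner products, which pins `z⊥` between `z''⊥ - η` and `z'⊥ + η` (the
roles of `y'` and `y''` swap when `y'⊥ < y''⊥`).

The horizontal components are small because ψ vanishes at `a` and `b`: below a point `u` of the
rectangle lies a point of the chord `[a, b]`, where ψ ≥ -ε and a subgradient of norm at most `K`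
exists, so ψ(u) ≥ -ε - K u⊥. A supporting plane at `u` stays below `0` at `a` and `b`, which
forces `|z∥| ℓ ≤ 2 (2 K u⊥ + ε) ≤ 10 K x⊥`.
-/

open MeasureTheory Set Metric Filter
open scoped RealInnerProductSpace ENNReal

noncomputable section

theorem ConvexOn.exists_dual_subgradient {E : Type*} [NormedAddCommGroup E] [NormedSpace ℝ E]
    {ψ : E → ℝ} (hψ : ConvexOn ℝ univ ψ) (hψc : Continuous ψ) (x : E) :
    ∃ φ : StrongDual ℝ E, ∀ y, ψ x + φ (y - x) ≤ ψ y := by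
  have hopen : IsOpen {p : E × ℝ | p.1 ∈ univ ∧ ψ p.1 < p.2} := by
    simp only [mem_univ, true_and]
    exact isOpen_lt (hψc.comp continuous_fst) continuous_snd
  obtain ⟨f, hf⟩ := geometric_hahn_banach_open_point (x := (x, ψ x))
    hψ.convex_strict_epigraph hopen (by simp)
  set g : StrongDual ℝ E := f.comp (ContinuousLinearMap.inl ℝ E ℝ)
  set c := f (0, 1)
  have hf_apply (p : E) (t : ℝ) : f (p, t) = g p + t * c := by
    rw [show ((p, t) : E × ℝ) = (p, 0) + t • (0, 1) by simp, map_add, map_smul, smul_eq_mul]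
    rfl
  have hc : c < 0 := by
    have := hf (x, ψ x + 1) (by simp)
    rw [hf_apply, hf_apply] at this
    linarith
  have hsupport (y : E) : g y + ψ y * c ≤ g x + ψ x * c := by
    refine le_of_forall_pos_lt_add fun r hr => ?_
    have := hf (y, ψ y + r / -c) ⟨mem_univ y, by simpa using div_pos hr (neg_pos.2 hc)⟩
    rw [hf_apply, hf_apply, add_mul, div_mul_eq_mul_div, div_neg, mul_div_assoc,
      div_self hc.ne, mul_one] at this
    linarith
  refine ⟨(-c)⁻¹ • g, fun y => ?_⟩
  have hgy : ((-c)⁻¹ • g) (y - x) * -c = g y - g x := by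
    rw [smul_apply, smul_eq_mul, map_sub]
    field_simp [hc.ne]
  nlinarith [hsupport y]

theorem subdiff_nonempty {ψ : E2 → ℝ} (hψ : ConvexOn ℝ univ ψ) (x : E2) :
    (subdiff ψ x).Nonempty := by
  obtain ⟨φ, hφ⟩ := hψ.exists_dual_subgradient (continuousOn_univ.1 (hψ.continuousOn isOpen_univ)) x
  exact ⟨(InnerProductSpace.toDual ℝ E2).symm φ, fun y => by
    simpa [InnerProductSpace.toDual_symm_apply] using hφ y⟩

theorem inner_sub_nonneg_of_mem_subdiff {ψ : E2 → ℝ} {x y z w : E2} (hz : z ∈ subdiff ψ x)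
    (hw : w ∈ subdiff ψ y) : 0 ≤ ⟪z - w, x - y⟫ := by
  have hzy := hz y
  have hwx := hw x
  simp only [inner_sub_left, inner_sub_right] at hzy hwx ⊢
  linarith

theorem inner_nonneg_of_mem_subdiff_openSegment {ψ : E2 → ℝ} {y' y'' z z' z'' : E2} {s : ℝ}
    (hs : s ∈ Ioo 0 1) (hz : z ∈ subdiff ψ (s • y' + (1 - s) • y''))
    (hz' : z' ∈ subdiff ψ y') (hz'' : z'' ∈ subdiff ψ y'') :
    0 ≤ ⟪z' - z, y' - y''⟫ ∧ 0 ≤ ⟪z - z'', y' - y''⟫ := by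
  have h' := inner_sub_nonneg_of_mem_subdiff hz' hz
  have h'' := inner_sub_nonneg_of_mem_subdiff hz hz''
  rw [show y' - (s • y' + (1 - s) • y'') = (1 - s) • (y' - y'') by module,
    inner_smul_right] at h'
  rw [show s • y' + (1 - s) • y'' - y'' = s • (y' - y'') by module, inner_smul_right] at h''
  exact ⟨nonneg_of_mul_nonneg_right h' (sub_pos.2 hs.2), nonneg_of_mul_nonneg_right h'' hs.1⟩

theorem sub_mul_norm_le_of_mem_subdiff {ψ : E2 → ℝ} {p u w : E2} {K : ℝ}
    (hw : w ∈ subdiff ψ p) (hwK : ‖w‖ ≤ K) : ψ p - K * ‖u - p‖ ≤ ψ u := by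
  have hinner : -(K * ‖u - p‖) ≤ ⟪w, u - p⟫ :=
    le_trans (neg_le_neg (mul_le_mul_of_nonneg_right hwK (norm_nonneg _)))
      (neg_le_of_abs_le (abs_real_inner_le_norm w (u - p)))
  linarith [hw u]

theorem inner_eq_coords (x y : E2) : ⟪x, y⟫ = x 0 * y 0 + x 1 * y 1 := by
  simp [PiLp.inner_apply, Fin.sum_univ_two, mul_comm]

def centeredRect (ℓ h : ℝ) : Set E2 := {u | |u 0| ≤ ℓ / 2 ∧ u 1 ∈ Icc 0 h}

theorem convex_centeredRect (ℓ h : ℝ) : Convex ℝ (centeredRect ℓ h) := by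
  rintro x ⟨hx0, hx1l, hx1r⟩ y ⟨hy0, hy1l, hy1r⟩ a b ha hb hab
  obtain ⟨hx0l, hx0r⟩ := abs_le.1 hx0
  obtain ⟨hy0l, hy0r⟩ := abs_le.1 hy0
  simp only [centeredRect, mem_ofPred_eq, mem_Icc, PiLp.add_apply, PiLp.smul_apply, smul_eq_mul]
  refine ⟨abs_le.2 ⟨by nlinarith, by nlinarith⟩, by positivity, by nlinarith⟩

section Chord

variable {ψ : E2 → ℝ} {ℓ : ℝ} {a b : E2}

theorem sInf_chord_sub_le (hψ : ConvexOn ℝ univ ψ) (hℓ : 0 < ℓ)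
    (ha0 : a 0 = -ℓ) (ha1 : a 1 = 0) (hb0 : b 0 = ℓ) (hb1 : b 1 = 0) {K : ℝ}
    (hK : ∀ p ∈ centeredRect ℓ 0, ∀ w ∈ subdiff ψ p, ‖w‖ ≤ K)
    {u : E2} (hu0 : |u 0| ≤ ℓ / 2) :
    sInf ((fun t : ℝ => ψ ((1 - t) • a + t • b)) '' Icc 0 1) - K * |u 1| ≤ ψ u := by
  have hψc : Continuous ψ := continuousOn_univ.1 (hψ.continuousOn isOpen_univ)
  obtain ⟨hu0l, hu0r⟩ := abs_le.1 hu0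
  set t := (u 0 + ℓ) / (2 * ℓ)
  set p := (1 - t) • a + t • b
  have ht : t ∈ Icc (0 : ℝ) 1 :=
    ⟨div_nonneg (by linarith) (by positivity), (div_le_one (by positivity)).2 (by linarith)⟩
  have hup : u - p = EuclideanSpace.single 1 (u 1) := by
    ext i
    fin_cases i
    · simp [p, t, ha0, hb0]
      field_simp
      ring
    · simp [p, ha1, hb1]
  have hp0 : p 0 = u 0 := by
    have := congrArg (· 0) hup
    simp at this
    linarith
  have hp1 : p 1 = 0 := by simpa using congrArg (· 1) hup
  obtain ⟨w, hw⟩ := subdiff_nonempty hψ p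
  have hbdd : BddBelow ((fun t : ℝ => ψ ((1 - t) • a + t • b)) '' Icc 0 1) :=
    isCompact_Icc.bddBelow_image (by fun_prop)
  calc sInf ((fun t : ℝ => ψ ((1 - t) • a + t • b)) '' Icc 0 1) - K * |u 1|
      ≤ ψ p - K * ‖u - p‖ := by
        rw [hup, PiLp.norm_single, Real.norm_eq_abs]
        exact sub_le_sub_right (csInf_le hbdd ⟨t, ht, rfl⟩) _
    _ ≤ ψ u := sub_mul_norm_le_of_mem_subdiff hw (hK p ⟨hp0 ▸ hu0, by simp [hp1]⟩ w hw)

theorem abs_apply_zero_mul_le_of_mem_subdiff (ha0 : a 0 = -ℓ) (ha1 : a 1 = 0)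
    (hb0 : b 0 = ℓ) (hb1 : b 1 = 0) (hψa : ψ a = 0) (hψb : ψ b = 0)
    {u w : E2} (hu0 : |u 0| ≤ ℓ / 2) (hw : w ∈ subdiff ψ u) :
    |w 0| * ℓ ≤ 2 * (w 1 * u 1 - ψ u) := by
  have hwa := hw a
  have hwb := hw b
  simp only [inner_eq_coords, PiLp.sub_apply, ha0, ha1, hb0, hb1, hψa, hψb] at hwa hwb
  obtain ⟨hu0l, hu0r⟩ := abs_le.1 hu0
  rcases abs_cases (w 0) with ⟨h, hw0⟩ | ⟨h, hw0⟩ <;> rw [h] <;> nlinarith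

theorem abs_apply_zero_mul_le_of_mem_centeredRect (hψ : ConvexOn ℝ univ ψ) (hℓ : 0 < ℓ)
    (ha0 : a 0 = -ℓ) (ha1 : a 1 = 0) (hb0 : b 0 = ℓ) (hb1 : b 1 = 0) (hψa : ψ a = 0)
    (hψb : ψ b = 0) {K h : ℝ} (hK : ∀ p ∈ centeredRect ℓ h, ∀ w ∈ subdiff ψ p, ‖w‖ ≤ K)
    {u w : E2} (hu : u ∈ centeredRect ℓ h) (hw : w ∈ subdiff ψ u) :
    |w 0| * ℓ ≤ 2 * (2 * K * h - sInf ((fun t : ℝ => ψ ((1 - t) • a + t • b)) '' Icc 0 1)) := by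
  obtain ⟨hu0, hu1l, hu1r⟩ := hu
  have hlow := sInf_chord_sub_le hψ hℓ ha0 ha1 hb0 hb1
    (fun p hp => hK p ⟨hp.1, hp.2.1, hp.2.2.trans (hu1l.trans hu1r)⟩) hu0
  have hwK : ‖w‖ ≤ K := hK u ⟨hu0, hu1l, hu1r⟩ w hw
  have hw1 : w 1 ≤ K := (le_abs_self _).trans ((PiLp.norm_apply_le w 1).trans hwK)
  rw [abs_of_nonneg hu1l] at hlow
  have hKu : K * u 1 ≤ K * h := mul_le_mul_of_nonneg_left hu1r ((norm_nonneg w).trans hwK)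
  nlinarith [abs_apply_zero_mul_le_of_mem_subdiff ha0 ha1 hb0 hb1 hψa hψb hu0 hw,
    mul_le_mul_of_nonneg_right hw1 hu1l]

end Chord

theorem apply_one_sub_ne_zero_of_ne {x y : E2} (hne : x ≠ y) {k : ℝ}
    (h : |x 0 - y 0| ≤ k * |x 1 - y 1|) : x 1 - y 1 ≠ 0 := by
  intro h1
  have h0 : x 0 - y 0 = 0 := by simpa [h1] using h
  exact hne (by ext i; fin_cases i <;> simp <;> linarith)

theorem sub_apply_one_mul_le_of_inner_nonneg {p q x y : E2} {η : ℝ} (h : 0 ≤ ⟪p - q, x - y⟫)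
    (hpq : |p 0 - q 0| * |x 0 - y 0| ≤ η * |x 1 - y 1|) :
    (q 1 - p 1) * (x 1 - y 1) ≤ η * |x 1 - y 1| := by
  simp only [inner_eq_coords, PiLp.sub_apply] at h
  linarith [le_abs_self ((p 0 - q 0) * (x 0 - y 0)), abs_mul (p 0 - q 0) (x 0 - y 0)]

theorem abs_sub_mul_le_of_abs_mul_le {α β v w ℓ D η : ℝ} (hℓ : 0 < ℓ) (hD : 0 < D)
    (hα : |α| * ℓ ≤ D) (hβ : |β| * ℓ ≤ D) (hv : |v| ≤ ℓ * η / (2 * D) * |w|) :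
    |α - β| * |v| ≤ η * |w| := by
  have hαβ : |α - β| ≤ 2 * D / ℓ := by
    rw [le_div_iff₀ hℓ]
    nlinarith [abs_sub α β]
  calc |α - β| * |v| ≤ 2 * D / ℓ * (ℓ * η / (2 * D) * |w|) :=
        mul_le_mul hαβ hv (abs_nonneg v) (by positivity)
    _ = η * |w| := by field_simp

theorem abs_sub_le_two_mul_of_mul_le {a b c v ξ η : ℝ} (hv : v ≠ 0)
    (hca : (c - a) * v ≤ η * |v|) (hbc : (b - c) * v ≤ η * |v|)
    (ha : |a - ξ| ≤ η) (hb : |b - ξ| ≤ η) : |c - ξ| ≤ 2 * η := by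
  obtain ⟨ha1, ha2⟩ := abs_le.1 ha
  obtain ⟨hb1, hb2⟩ := abs_le.1 hb
  rcases hv.lt_or_gt with hneg | hpos
  · rw [abs_of_neg hneg] at hca hbc
    exact abs_le.2 ⟨by nlinarith, by nlinarith⟩
  · rw [abs_of_pos hpos] at hca hbc
    exact abs_le.2 ⟨by nlinarith, by nlinarith⟩

/-- if the subdifferentials at two points of `Ω_{x⊥}` are `η`-close in
the vertical component to `ξ` and the segment joining them is almost vertical, then the
subdifferential at any point of the open segment is `2η`-close to `ξ` in the vertical
component. -/
theorem stmt17 : ∃ C : ℝ, 0 < C ∧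
    ∀ ℓ δ : ℝ, 0 < ℓ → 0 < δ →
    ∀ ψ : E2 → ℝ, ConvexOn ℝ Set.univ ψ →
    ∀ a b : E2, a 0 = -ℓ → a 1 = 0 → b 0 = ℓ → b 1 = 0 → ψ a = 0 → ψ b = 0 →
    ∀ ε : ℝ, ε = - sInf ((fun t : ℝ => ψ ((1 - t) • a + t • b)) '' Icc 0 1) →
    ∀ K : ℝ, 0 < K →
    (∀ y : E2, |y 0| ≤ ℓ / 2 → y 1 ∈ Icc 0 (2 * δ) → ∀ z ∈ subdiff ψ y, ‖z‖ ≤ K) →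
    ∀ xp : ℝ, 0 < xp → ε / K ≤ xp → xp ≤ δ →
    ∀ ξ η : ℝ, 0 < η →
    ∀ y' y'' : E2,
      |y' 0| ≤ ℓ / 2 → xp / 2 ≤ y' 1 → y' 1 ≤ 2 * xp →
      |y'' 0| ≤ ℓ / 2 → xp / 2 ≤ y'' 1 → y'' 1 ≤ 2 * xp →
      y' ≠ y'' →
      (∃ z' ∈ subdiff ψ y', |z' 1 - ξ| ≤ η) →
      (∃ z'' ∈ subdiff ψ y'', |z'' 1 - ξ| ≤ η) →
      |y' 0 - y'' 0| ≤ ℓ * η / (C * K * xp) * |y' 1 - y'' 1| →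
      ∀ s : ℝ, s ∈ Ioo (0 : ℝ) 1 →
        ∀ z ∈ subdiff ψ (s • y' + (1 - s) • y''), |z 1 - ξ| ≤ 2 * η := by
  refine ⟨20, by norm_num, ?_⟩
  intro ℓ δ hℓ hδ ψ hψ a b ha0 ha1 hb0 hb1 hψa hψb ε hε K hK hKbd xp hxp hεK hxpδ ξ η hη
    y' y'' hy'0 hy'1l hy'1u hy''0 hy''1l hy''1u hne ⟨z', hz', hz'ξ⟩ ⟨z'', hz'', hz''ξ⟩ hslope
    s hs z hz
  have hhor {u w : E2} (hu : u ∈ centeredRect ℓ (2 * xp)) (hw : w ∈ subdiff ψ u) :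
      |w 0| * ℓ ≤ 10 * K * xp := by
    have := abs_apply_zero_mul_le_of_mem_centeredRect hψ hℓ ha0 ha1 hb0 hb1 hψa hψb
      (fun p hp => hKbd p hp.1 ⟨hp.2.1, hp.2.2.trans (by linarith)⟩) hu hw
    rw [← neg_neg (sInf _), ← hε] at this
    linarith [(div_le_iff₀ hK).1 hεK]
  have hy' : y' ∈ centeredRect ℓ (2 * xp) := ⟨hy'0, by linarith, hy'1u⟩
  have hy'' : y'' ∈ centeredRect ℓ (2 * xp) := ⟨hy''0, by linarith, hy''1u⟩
  have hy := convex_centeredRect ℓ (2 * xp) hy' hy'' hs.1.le (sub_nonneg.2 hs.2.le)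
    (add_sub_cancel s 1)
  obtain ⟨h', h''⟩ := inner_nonneg_of_mem_subdiff_openSegment hs hz hz' hz''
  have hslope' : |y' 0 - y'' 0| ≤ ℓ * η / (2 * (10 * K * xp)) * |y' 1 - y'' 1| := by
    rwa [← mul_assoc, ← mul_assoc, show (2 : ℝ) * 10 = 20 by norm_num]
  have hD : 0 < 10 * K * xp := by positivity
  exact abs_sub_le_two_mul_of_mul_le (apply_one_sub_ne_zero_of_ne hne hslope)
    (sub_apply_one_mul_le_of_inner_nonneg h'
      (abs_sub_mul_le_of_abs_mul_le hℓ hD (hhor hy' hz') (hhor hy hz) hslope'))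
    (sub_apply_one_mul_le_of_inner_nonneg h''
      (abs_sub_mul_le_of_abs_mul_le hℓ hD (hhor hy hz) (hhor hy'' hz'') hslope'))
    hz'ξ hz''ξ
end
end
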